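/- arXiv:1209.1360 — 6 statements merged into one kernel-verified Lean document; each statement's English description precedes it below -/
import Mathlib

section
/- Let c_1, …, c_T be a simplex coding in ℝ^{T−1}, T ≥ 2, and let ρ_1, …, ρ_T be nonnegative reals with ∑_{y=1}^T ρ_y = 1. Set f_ρ = ∑_{y=1}^T ρ_y c_y. Then every label D with ⟨c_D, f_ρ⟩ = max_y ⟨c_y, f_ρ⟩ satisfies ρ_D = max_y ρ_y; in particular, if the maximizer of y ↦ ρ_y is unique and equal to b, then the decoding of f_ρ equals b (Fisher consistency of the simplex least squares loss). -/
open scoped RealInnerProductSpace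

/-- Fisher consistency of the simplex least squares loss: with
`f_ρ = ∑ y, ρ y • c y`, every label `D` maximizing `y ↦ ⟪c y, f_ρ⟫` satisfies
`ρ D = max_y ρ y`; in particular if the maximizer of `ρ` is unique and equal to `b`, then
the decoding of `f_ρ` equals `b`. -/
theorem simplex_ls_fisher_consistency (T : ℕ) (hT : 2 ≤ T)
    (c : Fin T → EuclideanSpace ℝ (Fin (T - 1)))
    (hnorm : ∀ y, ‖c y‖ = 1)
    (hinner : ∀ y y', y ≠ y' → ⟪c y, c y'⟫ = -(1 / ((T : ℝ) - 1)))
    (hsum : ∑ y, c y = 0)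
    (ρ : Fin T → ℝ) (hρ : ∀ y, 0 ≤ ρ y) (hρsum : ∑ y, ρ y = 1)
    (fρ : EuclideanSpace ℝ (Fin (T - 1))) (hfρ : fρ = ∑ y, ρ y • c y) :
    (∀ D : Fin T, (∀ y, ⟪c y, fρ⟫ ≤ ⟪c D, fρ⟫) → ∀ y, ρ y ≤ ρ D) ∧
    (∀ b : Fin T, (∀ y, y ≠ b → ρ y < ρ b) →
      ∀ D : Fin T, (∀ y, ⟪c y, fρ⟫ ≤ ⟪c D, fρ⟫) → D = b) := by
  have hT2 : (2 : ℝ) ≤ (T : ℝ) := by exact_mod_cast hT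
  have hpos : (0 : ℝ) < (T : ℝ) - 1 := by linarith
  have hkey : ∀ y, ⟪c y, fρ⟫ = (1 + 1 / ((T : ℝ) - 1)) * ρ y - 1 / ((T : ℝ) - 1) := by
    intro y
    rw [hfρ, inner_sum]
    simp only [real_inner_smul_right]
    rw [← Finset.add_sum_erase _ _ (Finset.mem_univ y)]
    have h1 : ⟪c y, c y⟫ = 1 := by
      rw [real_inner_self_eq_norm_sq, hnorm]; norm_num
    have h2 : ∑ x ∈ Finset.univ.erase y, ρ x * ⟪c y, c x⟫
        = (1 - ρ y) * (-(1 / ((T : ℝ) - 1))) := by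
      have hterm : ∀ x ∈ Finset.univ.erase y, ρ x * ⟪c y, c x⟫
          = ρ x * (-(1 / ((T : ℝ) - 1))) := fun x hx => by
        rw [hinner y x (Ne.symm (Finset.ne_of_mem_erase hx))]
      rw [Finset.sum_congr rfl hterm, ← Finset.sum_mul]
      congr 1
      have := Finset.sum_erase_add Finset.univ ρ (Finset.mem_univ y)
      linarith [hρsum, this]
    rw [h1, h2]; ring
  have hmono : ∀ D : Fin T, (∀ y, ⟪c y, fρ⟫ ≤ ⟪c D, fρ⟫) → ∀ y, ρ y ≤ ρ D := by
    intro D hD y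
    have h := hD y
    rw [hkey, hkey] at h
    have hc : (0 : ℝ) < 1 + 1 / ((T : ℝ) - 1) := by positivity
    nlinarith
  refine ⟨hmono, ?_⟩
  intro b hb D hD
  by_contra hne
  exact absurd (hmono D hD b) (not_le.mpr (hb D hne))
end

section
/- Let c_1, …, c_T be a simplex coding in ℝ^{T−1}, T ≥ 2, and let ρ_1, …, ρ_T be nonnegative reals with ∑_{y=1}^T ρ_y = 1. Set f_ρ = ∑_{y=1}^T ρ_y c_y. Let α ∈ ℝ^{T−1} and let D(α) ∈ {1, …, T} be any label with ⟨c_{D(α)}, α⟩ = max_y ⟨c_y, α⟩. Then the pointwise excess misclassification error is controlled by the distance to f_ρ: max_y ρ_y − ρ_{D(α)} ≤ √(2(T−1)/T) · ‖α − f_ρ‖. Equivalently, by the S-LS inner risk decomposition, max_y ρ_y − ρ_{D(α)} ≤ √(2(T−1)/T) · (∑_y ρ_y ‖c_y − α‖² − ∑_y ρ_y ‖c_y − f_ρ‖²)^{1/2}. -/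
/-!
The decoded label `D` satisfies `⟪c y - c D, α⟫ ≤ 0`, while `⟪c y - c D, f_ρ⟫` equals
`(ρ y - ρ D) · T/(T-1)` because the code vectors have pairwise inner product `-1/(T-1)`.
Hence `(ρ y - ρ D) · T/(T-1) ≤ ⟪c y - c D, f_ρ - α⟫`, and Cauchy–Schwarz with
`‖c y - c D‖² ≤ 2T/(T-1)` gives the first bound. The second follows from the bias–variance
identity `∑ ρ y ‖c y - α‖² - ∑ ρ y ‖c y - f_ρ‖² = ‖α - f_ρ‖²`, valid for any weights summing
to one. The argument works for unit vectors with any common pairwise inner product `-κ`,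
`1 + κ > 0`; the simplex coding is `κ = 1/(T-1)`.
-/

open scoped RealInnerProductSpace

section SimplexCode

variable {E : Type*} [NormedAddCommGroup E] [InnerProductSpace ℝ E] {ι : Type*}

lemma inner_weightedSum_eq_sum_mul_inner [Fintype ι] (c : ι → E) (ρ : ι → ℝ) (v : E) :
    ⟪∑ y, ρ y • c y, v⟫ = ∑ y, ρ y * ⟪c y, v⟫ := by
  simp only [sum_inner, real_inner_smul_left]

lemma inner_code_eq_of_inner_eq_neg [DecidableEq ι] {c : ι → E} {κ : ℝ}
    (hnorm : ∀ y, ‖c y‖ = 1) (hinner : ∀ y y', y ≠ y' → ⟪c y, c y'⟫ = -κ) (y y' : ι) :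
    ⟪c y, c y'⟫ = (1 + κ) * (if y = y' then 1 else 0) - κ := by
  by_cases h : y = y'
  · subst h
    simp [hnorm]
  · simp [hinner y y' h, h]

lemma inner_code_weightedSum [Fintype ι] {c : ι → E} {κ : ℝ} (hnorm : ∀ y, ‖c y‖ = 1)
    (hinner : ∀ y y', y ≠ y' → ⟪c y, c y'⟫ = -κ) {ρ : ι → ℝ} (hρsum : ∑ y, ρ y = 1) (y : ι) :
    ⟪c y, ∑ y', ρ y' • c y'⟫ = (1 + κ) * ρ y - κ := by
  classical
  rw [real_inner_comm, inner_weightedSum_eq_sum_mul_inner]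
  simp_rw [real_inner_comm, inner_code_eq_of_inner_eq_neg hnorm hinner y, mul_sub, mul_ite,
    mul_zero, mul_one, Finset.sum_sub_distrib, ← Finset.sum_mul, hρsum]
  simp [mul_comm]

lemma norm_sub_code_sq_le {c : ι → E} {κ : ℝ} (hnorm : ∀ y, ‖c y‖ = 1)
    (hinner : ∀ y y', y ≠ y' → ⟪c y, c y'⟫ = -κ) (hκ : 0 ≤ 1 + κ) (y y' : ι) :
    ‖c y - c y'‖ ^ 2 ≤ 2 * (1 + κ) := by
  by_cases h : y = y'
  · simp [h, hκ]
  · rw [norm_sub_sq_real, hnorm, hnorm, hinner y y' h]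
    linarith

lemma sub_le_sqrt_mul_norm_sub_weightedSum [Fintype ι] {c : ι → E} {κ : ℝ}
    (hnorm : ∀ y, ‖c y‖ = 1) (hinner : ∀ y y', y ≠ y' → ⟪c y, c y'⟫ = -κ) (hκ : 0 < 1 + κ)
    {ρ : ι → ℝ} (hρsum : ∑ y, ρ y = 1) {α : E} {D : ι} (hD : ∀ y, ⟪c y, α⟫ ≤ ⟪c D, α⟫) (y : ι) :
    ρ y - ρ D ≤ Real.sqrt (2 / (1 + κ)) * ‖α - ∑ y', ρ y' • c y'‖ := by
  set f := ∑ y', ρ y' • c y'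
  have hcode : ⟪c y - c D, f⟫ = (1 + κ) * (ρ y - ρ D) := by
    rw [inner_sub_left, inner_code_weightedSum hnorm hinner hρsum,
      inner_code_weightedSum hnorm hinner hρsum]
    ring
  have hdecode : ⟪c y - c D, α⟫ ≤ 0 := by
    rw [inner_sub_left]
    linarith [hD y]
  have hnorm_le : ‖c y - c D‖ ≤ Real.sqrt (2 * (1 + κ)) :=
    Real.le_sqrt_of_sq_le (norm_sub_code_sq_le hnorm hinner hκ.le y D)
  have hsqrt : Real.sqrt (2 * (1 + κ)) = (1 + κ) * Real.sqrt (2 / (1 + κ)) := by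
    rw [show 2 * (1 + κ) = (1 + κ) ^ 2 * (2 / (1 + κ)) by field_simp,
      Real.sqrt_mul (sq_nonneg _), Real.sqrt_sq hκ.le]
  have hscaled : (1 + κ) * (ρ y - ρ D) ≤ (1 + κ) * (Real.sqrt (2 / (1 + κ)) * ‖α - f‖) :=
    calc (1 + κ) * (ρ y - ρ D) = ⟪c y - c D, f - α⟫ + ⟪c y - c D, α⟫ := by
          rw [← inner_add_right, sub_add_cancel, hcode]
      _ ≤ ‖c y - c D‖ * ‖f - α‖ := by linarith [real_inner_le_norm (c y - c D) (f - α)]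
      _ ≤ Real.sqrt (2 * (1 + κ)) * ‖α - f‖ := by
          rw [norm_sub_rev f α]
          exact mul_le_mul_of_nonneg_right hnorm_le (norm_nonneg _)
      _ = (1 + κ) * (Real.sqrt (2 / (1 + κ)) * ‖α - f‖) := by rw [hsqrt, mul_assoc]
  exact le_of_mul_le_mul_left hscaled hκ

lemma weighted_sq_dist_sub_weighted_sq_dist_mean [Fintype ι] (c : ι → E) {ρ : ι → ℝ}
    (hρsum : ∑ y, ρ y = 1) (α : E) :
    ∑ y, ρ y * ‖c y - α‖ ^ 2 - ∑ y, ρ y * ‖c y - ∑ y', ρ y' • c y'‖ ^ 2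
      = ‖α - ∑ y', ρ y' • c y'‖ ^ 2 := by
  set f := ∑ y', ρ y' • c y'
  have hpoint : ∀ y,
      ‖c y - α‖ ^ 2 - ‖c y - f‖ ^ 2 = ‖α‖ ^ 2 - ‖f‖ ^ 2 - 2 * ⟪c y, α - f⟫ := by
    intro y
    rw [norm_sub_sq_real, norm_sub_sq_real, inner_sub_right]
    ring
  have hmean : ∑ y, ρ y * ⟪c y, α - f⟫ = ⟪f, α - f⟫ :=
    (inner_weightedSum_eq_sum_mul_inner c ρ (α - f)).symm
  calc ∑ y, ρ y * ‖c y - α‖ ^ 2 - ∑ y, ρ y * ‖c y - f‖ ^ 2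
      = ∑ y, ρ y * (‖α‖ ^ 2 - ‖f‖ ^ 2) - 2 * ∑ y, ρ y * ⟪c y, α - f⟫ := by
        rw [← Finset.sum_sub_distrib, Finset.mul_sum, ← Finset.sum_sub_distrib]
        refine Finset.sum_congr rfl fun y _ => ?_
        rw [← mul_sub, hpoint]
        ring
    _ = ‖α‖ ^ 2 - ‖f‖ ^ 2 - 2 * ⟪f, α - f⟫ := by rw [← Finset.sum_mul, hρsum, one_mul, hmean]
    _ = ‖α - f‖ ^ 2 := by
        rw [norm_sub_sq_real, inner_sub_right, real_inner_self_eq_norm_sq, real_inner_comm]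
        ring

end SimplexCode

theorem simplex_ls_pointwise_comparison_general (T : ℕ) (hT : 2 ≤ T)
    (c : Fin T → EuclideanSpace ℝ (Fin (T - 1)))
    (hnorm : ∀ y, ‖c y‖ = 1)
    (hinner : ∀ y y', y ≠ y' → ⟪c y, c y'⟫ = -(1 / ((T : ℝ) - 1)))
    (ρ : Fin T → ℝ) (hρsum : ∑ y, ρ y = 1)
    (fρ : EuclideanSpace ℝ (Fin (T - 1))) (hfρ : fρ = ∑ y, ρ y • c y)
    (α : EuclideanSpace ℝ (Fin (T - 1)))
    (D : Fin T) (hD : ∀ y, ⟪c y, α⟫ ≤ ⟪c D, α⟫) :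
    (∀ y, ρ y - ρ D ≤ Real.sqrt (2 * ((T : ℝ) - 1) / T) * ‖α - fρ‖) ∧
    (∀ y, ρ y - ρ D ≤ Real.sqrt (2 * ((T : ℝ) - 1) / T) *
      Real.sqrt (∑ y', ρ y' * ‖c y' - α‖ ^ 2 - ∑ y', ρ y' * ‖c y' - fρ‖ ^ 2)) := by
  have hT1 : (0 : ℝ) < (T : ℝ) - 1 := by
    have : (2 : ℝ) ≤ T := by exact_mod_cast hT
    linarith
  have hκ : 0 < 1 + 1 / ((T : ℝ) - 1) := by positivity
  have hconst : 2 / (1 + 1 / ((T : ℝ) - 1)) = 2 * ((T : ℝ) - 1) / T := by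
    field_simp
    ring
  have hbound : ∀ y, ρ y - ρ D ≤ Real.sqrt (2 * ((T : ℝ) - 1) / T) * ‖α - fρ‖ := by
    intro y
    rw [← hconst, hfρ]
    exact sub_le_sqrt_mul_norm_sub_weightedSum hnorm hinner hκ hρsum hD y
  refine ⟨hbound, fun y => ?_⟩
  rw [hfρ, weighted_sq_dist_sub_weighted_sq_dist_mean c hρsum α, Real.sqrt_sq (norm_nonneg _),
    ← hfρ]
  exact hbound y

/-- pointwise comparison for the simplex least squares loss.  With
`f_ρ = ∑ y, ρ y • c y` and `D α` any label maximizing `y ↦ ⟪c y, α⟫`, the pointwise excess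
misclassification error satisfies
`max_y ρ y - ρ (D α) ≤ √(2(T-1)/T) ‖α - f_ρ‖`, and equivalently (via the S-LS inner risk
decomposition)
`max_y ρ y - ρ (D α) ≤ √(2(T-1)/T) (∑ y, ρ y ‖c y - α‖² - ∑ y, ρ y ‖c y - f_ρ‖²)^{1/2}`. -/
theorem simplex_ls_pointwise_comparison (T : ℕ) (hT : 2 ≤ T)
    (c : Fin T → EuclideanSpace ℝ (Fin (T - 1)))
    (hnorm : ∀ y, ‖c y‖ = 1)
    (hinner : ∀ y y', y ≠ y' → ⟪c y, c y'⟫ = -(1 / ((T : ℝ) - 1)))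
    (hsum : ∑ y, c y = 0)
    (ρ : Fin T → ℝ) (hρ : ∀ y, 0 ≤ ρ y) (hρsum : ∑ y, ρ y = 1)
    (fρ : EuclideanSpace ℝ (Fin (T - 1))) (hfρ : fρ = ∑ y, ρ y • c y)
    (α : EuclideanSpace ℝ (Fin (T - 1)))
    (D : Fin T) (hD : ∀ y, ⟪c y, α⟫ ≤ ⟪c D, α⟫) :
    (∀ y, ρ y - ρ D ≤ Real.sqrt (2 * ((T : ℝ) - 1) / T) * ‖α - fρ‖) ∧
    (∀ y, ρ y - ρ D ≤ Real.sqrt (2 * ((T : ℝ) - 1) / T) *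
      Real.sqrt (∑ y', ρ y' * ‖c y' - α‖ ^ 2 - ∑ y', ρ y' * ‖c y' - fρ‖ ^ 2)) :=
  simplex_ls_pointwise_comparison_general T hT c hnorm hinner ρ hρsum fρ hfρ α D hD
end

section
/- Let c_1, …, c_T be a simplex coding in ℝ^{T−1}, T ≥ 2, and let ρ_1, …, ρ_T be nonnegative reals with ∑_{y=1}^T ρ_y = 1. Let b ∈ {1, …, T} satisfy ρ_b = max_y ρ_y. Then the code vector c_b minimizes over all α ∈ ℝ^{T−1} the SC-SVM conditional risk C(α) = ∑_{y=1}^T ρ_y ∑_{y' ≠ y} max(0, 1/(T−1) + ⟨c_{y'}, α⟩) (Fisher consistency of the simplex cone SVM loss: f_ρ = c_{b_ρ}). -/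
open scoped RealInnerProductSpace

/-!
Since `∑ ρ = 1`, the risk rewrites as `C α = ∑ y, (1 - ρ y) * max 0 (t + ⟪c y, α⟫)` with
`t = 1/(T-1)`. Each weight `1 - ρ y` is at least `1 - ρ b ≥ 0`, so dropping the `max` gives
`C α ≥ (1 - ρ b) * ∑ y, (t + ⟪c y, α⟫) = (1 - ρ b) * T t`, using `∑ c y = 0`. At `α = c b` every
hinge vanishes except the `b`-th, which is `1 + t = T t`, so the bound is attained.
-/

open Finset

section Reweighting

variable {ι : Type*} [Fintype ι]

theorem sum_mul_sum_erase_of_sum_eq_one [DecidableEq ι] (ρ f : ι → ℝ) (hρ : ∑ y, ρ y = 1) :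
    ∑ y, ρ y * ∑ y' ∈ univ.erase y, f y' = ∑ y, (1 - ρ y) * f y := by
  simp_rw [sum_erase_eq_sub (mem_univ _), mul_sub, sub_mul, one_mul, sum_sub_distrib,
    ← sum_mul, hρ, one_mul]

theorem one_sub_mul_sum_le_sum_one_sub_mul_max_zero (ρ s : ι → ℝ) {b : ι}
    (hb : ∀ y, ρ y ≤ ρ b) (hb1 : ρ b ≤ 1) :
    (1 - ρ b) * ∑ y, s y ≤ ∑ y, (1 - ρ y) * max 0 (s y) := by
  rw [mul_sum]
  refine sum_le_sum fun y _ => ?_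
  calc (1 - ρ b) * s y ≤ (1 - ρ b) * max 0 (s y) :=
        mul_le_mul_of_nonneg_left (le_max_right _ _) (by linarith)
    _ ≤ (1 - ρ y) * max 0 (s y) :=
        mul_le_mul_of_nonneg_right (by linarith [hb y]) (le_max_left _ _)

end Reweighting

section SimplexCode

variable {ι E : Type*} [NormedAddCommGroup E] [InnerProductSpace ℝ E] {c : ι → E}

theorem sum_add_inner_of_sum_eq_zero [Fintype ι] (hsum : ∑ y, c y = 0) (t : ℝ) (α : E) :
    ∑ y, (t + ⟪c y, α⟫) = Fintype.card ι * t := by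
  rw [sum_add_distrib, ← sum_inner, hsum, inner_zero_left, add_zero, sum_const, card_univ,
    nsmul_eq_mul]

theorem max_zero_add_inner_code [DecidableEq ι] {t : ℝ} (ht : 0 ≤ t) {b : ι} (hnorm : ‖c b‖ = 1)
    (hinner : ∀ y, y ≠ b → ⟪c y, c b⟫ = -t) (y : ι) :
    max 0 (t + ⟪c y, c b⟫) = if y = b then 1 + t else 0 := by
  split_ifs with hy
  · rw [hy, real_inner_self_eq_norm_sq, hnorm, one_pow, max_eq_right (by linarith), add_comm]
  · simp [hinner y hy]

end SimplexCode

/-- Fisher consistency of the simplex cone SVM loss: if `b` maximizes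
`y ↦ ρ y`, then the code vector `c b` minimizes over all `α ∈ ℝ^{T-1}` the SC-SVM
conditional risk `C(α) = ∑ y, ρ y ∑_{y' ≠ y} max(0, 1/(T-1) + ⟪c y', α⟫)`. -/
theorem simplex_cone_svm_fisher_consistency (T : ℕ) (hT : 2 ≤ T)
    (c : Fin T → EuclideanSpace ℝ (Fin (T - 1)))
    (hnorm : ∀ y, ‖c y‖ = 1)
    (hinner : ∀ y y', y ≠ y' → ⟪c y, c y'⟫ = -(1 / ((T : ℝ) - 1)))
    (hsum : ∑ y, c y = 0)
    (ρ : Fin T → ℝ) (hρ : ∀ y, 0 ≤ ρ y) (hρsum : ∑ y, ρ y = 1)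
    (b : Fin T) (hb : ∀ y, ρ y ≤ ρ b)
    (C : EuclideanSpace ℝ (Fin (T - 1)) → ℝ)
    (hC : ∀ α, C α = ∑ y, ρ y *
      ∑ y' ∈ Finset.univ.erase y, max 0 (1 / ((T : ℝ) - 1) + ⟪c y', α⟫)) :
    ∀ α : EuclideanSpace ℝ (Fin (T - 1)), C (c b) ≤ C α := by
  intro α
  set t : ℝ := 1 / ((T : ℝ) - 1)
  have hT1 : (0 : ℝ) < T - 1 := by
    have : (2 : ℝ) ≤ T := by exact_mod_cast hT
    linarith
  have hTt : (T : ℝ) * t = 1 + t := by simp only [t]; field_simp; ring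
  have hCt (β) : C β = ∑ y, (1 - ρ y) * max 0 (t + ⟪c y, β⟫) :=
    (hC β).trans (sum_mul_sum_erase_of_sum_eq_one ρ _ hρsum)
  have hρb : ρ b ≤ 1 := hρsum ▸ single_le_sum (fun y _ => hρ y) (mem_univ b)
  calc C (c b) = (1 - ρ b) * (1 + t) := by
        simp [hCt, max_zero_add_inner_code (by positivity) (hnorm b) (hinner · b)]
    _ = (1 - ρ b) * ∑ y, (t + ⟪c y, α⟫) := by
        rw [sum_add_inner_of_sum_eq_zero hsum, Fintype.card_fin, hTt]
    _ ≤ C α := hCt α ▸ one_sub_mul_sum_le_sum_one_sub_mul_max_zero ρ _ hb hρb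
end

section
/- Let c_1, …, c_T be a simplex coding in ℝ^{T−1}, T ≥ 2, let ρ_1, …, ρ_T be nonnegative reals with ∑_{y=1}^T ρ_y = 1, and let b satisfy ρ_b = max_y ρ_y. Define the SH-SVM conditional risk C(α) = ∑_{y=1}^T ρ_y max(0, 1 − ⟨c_y, α⟩). Then: (i) the code vector c_b minimizes C over the convex hull conv{c_1, …, c_T} (Fisher consistency of the SH-SVM loss restricted to the convex hull of the codes); and (ii) for every α ∈ conv{c_1, …, c_T} and every label D(α) with ⟨c_{D(α)}, α⟩ = max_y ⟨c_y, α⟩, one has ρ_b − ρ_{D(α)} ≤ (T−1)(C(α) − C(c_b)). -/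
open scoped RealInnerProductSpace
open Finset

/-!
Write `α = ∑ z, w z • c z` with `w` in the standard simplex. The Gram matrix of the codes gives
`1 - ⟪c y, α⟫ = (1 - d) (1 - w y)` with `d = -1/(T-1)`, which is nonnegative, so the hinge never
clips and `C α - C (c b) = (1 - d) (ρ b - ∑ y, ρ y w y) = (1 - d) ∑ y, (ρ b - ρ y) w y ≥ 0`.
Maximizing `⟪c y, α⟫` is maximizing `w y`, so the decoded label `D` has `T w D ≥ 1`; keeping only
the term `y = D` of the last sum gives `ρ b - ρ D ≤ T w D (ρ b - ρ D) ≤ (T - 1) (C α - C (c b))`,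
as `(T - 1) (1 - d) = T`.
-/

theorem convexHull_range_eq_image_stdSimplex {R E ι : Type*} [Field R] [LinearOrder R]
    [IsStrictOrderedRing R] [AddCommGroup E] [Module R E] [Fintype ι] (c : ι → E) :
    convexHull R (Set.range c) = (fun w => ∑ i, w i • c i) '' stdSimplex R ι := by
  classical
  have hL : (fun w : ι → R => ∑ i, w i • c i) = Fintype.linearCombination R c :=
    funext fun w => (Fintype.linearCombination_apply R c w).symm
  rw [hL, ← convexHull_rangle_single_eq_stdSimplex, LinearMap.image_convexHull, ← Set.range_comp]
  congr
  funext i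
  simp [Fintype.linearCombination_apply_single]

section Weights

variable {ι : Type*} [Fintype ι] {w ρ : ι → ℝ}

theorem sub_sum_mul_eq_sum_sub_mul (hw : ∑ y, w y = 1) (b : ι) :
    ρ b - ∑ y, ρ y * w y = ∑ y, (ρ b - ρ y) * w y := by
  simp only [sub_mul, sum_sub_distrib, ← mul_sum, hw, mul_one]

theorem sum_mul_le_of_forall_le (hw : w ∈ stdSimplex ℝ ι) {b : ι} (hb : ∀ y, ρ y ≤ ρ b) :
    ∑ y, ρ y * w y ≤ ρ b := by
  rw [← sub_nonneg, sub_sum_mul_eq_sum_sub_mul hw.2]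
  exact sum_nonneg fun y _ => mul_nonneg (sub_nonneg.2 (hb y)) (hw.1 y)

theorem sub_le_card_mul_sub_sum_mul (hw : w ∈ stdSimplex ℝ ι) {b D : ι}
    (hb : ∀ y, ρ y ≤ ρ b) (hD : ∀ y, w y ≤ w D) :
    ρ b - ρ D ≤ Fintype.card ι * (ρ b - ∑ y, ρ y * w y) := by
  have hwD : 1 ≤ Fintype.card ι * w D := by
    calc (1 : ℝ) = ∑ y, w y := hw.2.symm
      _ ≤ ∑ _y : ι, w D := sum_le_sum fun y _ => hD y
      _ = Fintype.card ι * w D := by rw [sum_const, card_univ, nsmul_eq_mul]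
  have hgap : (ρ b - ρ D) * w D ≤ ρ b - ∑ y, ρ y * w y := by
    rw [sub_sum_mul_eq_sum_sub_mul hw.2]
    exact single_le_sum (f := fun y => (ρ b - ρ y) * w y)
      (fun y _ => mul_nonneg (sub_nonneg.2 (hb y)) (hw.1 y)) (mem_univ D)
  calc ρ b - ρ D ≤ (Fintype.card ι * w D) * (ρ b - ρ D) :=
        le_mul_of_one_le_left (sub_nonneg.2 (hb D)) hwD
    _ = Fintype.card ι * ((ρ b - ρ D) * w D) := by ring
    _ ≤ Fintype.card ι * (ρ b - ∑ y, ρ y * w y) :=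
        mul_le_mul_of_nonneg_left hgap (Nat.cast_nonneg _)

end Weights

section SimplexCode

variable {ι E : Type*} [Fintype ι] [NormedAddCommGroup E] [InnerProductSpace ℝ E]
  {c : ι → E} {d : ℝ}

noncomputable def simplexHingeRisk (c : ι → E) (ρ : ι → ℝ) (α : E) : ℝ :=
  ∑ y, ρ y * max 0 (1 - ⟪c y, α⟫)

theorem inner_sum_smul_of_inner_eq (hnorm : ∀ y, ‖c y‖ = 1)
    (hinner : ∀ y z, y ≠ z → ⟪c y, c z⟫ = d) (w : ι → ℝ) (y : ι) :
    ⟪c y, ∑ z, w z • c z⟫ = (1 - d) * w y + d * ∑ z, w z := by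
  classical
  have hgram : ∀ z, ⟪c y, c z⟫ = d + if z = y then 1 - d else 0 := by
    intro z
    split_ifs with h
    · rw [h, real_inner_self_eq_norm_sq, hnorm, one_pow]; ring
    · rw [hinner y z (Ne.symm h), add_zero]
  simp only [inner_sum, real_inner_smul_right, hgram, mul_add, mul_ite, mul_zero,
    sum_add_distrib, sum_ite_eq', mem_univ, if_true, ← sum_mul]
  ring

theorem le_of_inner_sum_smul_le (hnorm : ∀ y, ‖c y‖ = 1)
    (hinner : ∀ y z, y ≠ z → ⟪c y, c z⟫ = d) (hd : d < 1) {w : ι → ℝ} {y D : ι}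
    (h : ⟪c y, ∑ z, w z • c z⟫ ≤ ⟪c D, ∑ z, w z • c z⟫) : w y ≤ w D := by
  rw [inner_sum_smul_of_inner_eq hnorm hinner, inner_sum_smul_of_inner_eq hnorm hinner] at h
  exact le_of_mul_le_mul_left (by linarith) (sub_pos.2 hd)

theorem simplexHingeRisk_sum_smul (hnorm : ∀ y, ‖c y‖ = 1)
    (hinner : ∀ y z, y ≠ z → ⟪c y, c z⟫ = d) (hd : d ≤ 1) {w : ι → ℝ}
    (hw : w ∈ stdSimplex ℝ ι) (ρ : ι → ℝ) :
    simplexHingeRisk c ρ (∑ z, w z • c z) = (1 - d) * ∑ y, ρ y * (1 - w y) := by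
  have hmargin : ∀ y, 1 - ⟪c y, ∑ z, w z • c z⟫ = (1 - d) * (1 - w y) := by
    intro y
    rw [inner_sum_smul_of_inner_eq hnorm hinner, hw.2]
    ring
  have hclip : ∀ y, max 0 (1 - ⟪c y, ∑ z, w z • c z⟫) = (1 - d) * (1 - w y) := fun y => by
    rw [hmargin, max_eq_right]
    exact mul_nonneg (sub_nonneg.2 hd) (sub_nonneg.2 (mem_Icc_of_mem_stdSimplex hw y).2)
  simp only [simplexHingeRisk, hclip, mul_sum]
  exact sum_congr rfl fun y _ => by ring

theorem simplexHingeRisk_sum_smul_sub_code [DecidableEq ι] (hnorm : ∀ y, ‖c y‖ = 1)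
    (hinner : ∀ y z, y ≠ z → ⟪c y, c z⟫ = d) (hd : d ≤ 1) {w : ι → ℝ}
    (hw : w ∈ stdSimplex ℝ ι) (ρ : ι → ℝ) (b : ι) :
    simplexHingeRisk c ρ (∑ z, w z • c z) - simplexHingeRisk c ρ (c b) =
      (1 - d) * (ρ b - ∑ y, ρ y * w y) := by
  have hcode : c b = ∑ z, (Pi.single b 1 : ι → ℝ) z • c z := by
    simp [Pi.single_apply, ite_smul]
  rw [hcode, simplexHingeRisk_sum_smul hnorm hinner hd hw,
    simplexHingeRisk_sum_smul hnorm hinner hd (single_mem_stdSimplex ℝ b), ← mul_sub,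
    ← sum_sub_distrib]
  simp [mul_sub, Pi.single_apply, sum_sub_distrib]

end SimplexCode

theorem simplex_halfspace_svm_consistency_and_comparison_general (T : ℕ) (hT : 2 ≤ T)
    (c : Fin T → EuclideanSpace ℝ (Fin (T - 1)))
    (hnorm : ∀ y, ‖c y‖ = 1)
    (hinner : ∀ y y', y ≠ y' → ⟪c y, c y'⟫ = -(1 / ((T : ℝ) - 1)))
    (ρ : Fin T → ℝ)
    (b : Fin T) (hb : ∀ y, ρ y ≤ ρ b)
    (C : EuclideanSpace ℝ (Fin (T - 1)) → ℝ)
    (hC : ∀ α, C α = ∑ y, ρ y * max 0 (1 - ⟪c y, α⟫)) :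
    (∀ α ∈ convexHull ℝ (Set.range c), C (c b) ≤ C α) ∧
    (∀ α ∈ convexHull ℝ (Set.range c), ∀ D : Fin T, (∀ y, ⟪c y, α⟫ ≤ ⟪c D, α⟫) →
      ρ b - ρ D ≤ ((T : ℝ) - 1) * (C α - C (c b))) := by
  obtain rfl : C = simplexHingeRisk c ρ := funext hC
  have hT1 : (0 : ℝ) < T - 1 := by
    have : (2 : ℝ) ≤ T := by exact_mod_cast hT
    linarith
  have hd : -(1 / ((T : ℝ) - 1)) < 1 := by linarith [one_div_pos.2 hT1]
  have hscale : ((T : ℝ) - 1) * (1 - -(1 / ((T : ℝ) - 1))) = T := by field_simp; ring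
  rw [convexHull_range_eq_image_stdSimplex]
  refine ⟨?_, ?_⟩
  · rintro _ ⟨w, hw, rfl⟩
    rw [← sub_nonneg, simplexHingeRisk_sum_smul_sub_code hnorm hinner hd.le hw]
    exact mul_nonneg (by linarith) (sub_nonneg.2 (sum_mul_le_of_forall_le hw hb))
  · rintro _ ⟨w, hw, rfl⟩ D hD
    rw [simplexHingeRisk_sum_smul_sub_code hnorm hinner hd.le hw, ← mul_assoc, hscale]
    simpa using sub_le_card_mul_sub_sum_mul hw hb
      fun y => le_of_inner_sum_smul_le hnorm hinner hd (hD y)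

/-- Fisher consistency and pointwise comparison for the simplex half-space
SVM loss restricted to the convex hull of the codes: if `b` maximizes `ρ` and
`C(α) = ∑ y, ρ y max(0, 1 - ⟪c y, α⟫)`, then (i) `c b` minimizes `C` over
`conv{c 1, …, c T}`, and (ii) for every `α` in the convex hull and every label `D α`
maximizing `y ↦ ⟪c y, α⟫`, `ρ b - ρ (D α) ≤ (T-1)(C α - C (c b))`. -/
theorem simplex_halfspace_svm_consistency_and_comparison (T : ℕ) (hT : 2 ≤ T)
    (c : Fin T → EuclideanSpace ℝ (Fin (T - 1)))
    (hnorm : ∀ y, ‖c y‖ = 1)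
    (hinner : ∀ y y', y ≠ y' → ⟪c y, c y'⟫ = -(1 / ((T : ℝ) - 1)))
    (hsum : ∑ y, c y = 0)
    (ρ : Fin T → ℝ) (hρ : ∀ y, 0 ≤ ρ y) (hρsum : ∑ y, ρ y = 1)
    (b : Fin T) (hb : ∀ y, ρ y ≤ ρ b)
    (C : EuclideanSpace ℝ (Fin (T - 1)) → ℝ)
    (hC : ∀ α, C α = ∑ y, ρ y * max 0 (1 - ⟪c y, α⟫)) :
    (∀ α ∈ convexHull ℝ (Set.range c), C (c b) ≤ C α) ∧
    (∀ α ∈ convexHull ℝ (Set.range c), ∀ D : Fin T, (∀ y, ⟪c y, α⟫ ≤ ⟪c D, α⟫) →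
      ρ b - ρ D ≤ ((T : ℝ) - 1) * (C α - C (c b))) :=
  simplex_halfspace_svm_consistency_and_comparison_general T hT c hnorm hinner ρ b hb C hC
end

section
/- Let (X, μ) be a measurable space with a probability measure, let c_1, …, c_T be a simplex coding in ℝ^{T−1}, T ≥ 2, and let ρ_1, …, ρ_T : X → [0,1] be measurable with ∑_{y=1}^T ρ_y(x) = 1 for all x. Let D : ℝ^{T−1} → {1, …, T} be a measurable decoding map, i.e., ⟨c_{D(α)}, α⟩ = max_y ⟨c_y, α⟩ for all α. Define f_ρ(x) = ∑_{y=1}^T ρ_y(x) c_y, the misclassification risk R(g) = ∫_X (1 − ρ_{g(x)}(x)) dμ(x) for measurable g : X → {1, …, T}, and the expected S-LS risk E(f) = ∫_X ∑_{y=1}^T ρ_y(x) ‖c_y − f(x)‖² dμ(x). Then for every measurable f : X → ℝ^{T−1} with ∫ ‖f‖² dμ < ∞: R(D∘f) − R(D∘f_ρ) ≤ √(2(T−1)/T) · (E(f) − E(f_ρ))^{1/2}, and f_ρ minimizes E over all such square-integrable f. -/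
/-!
Fix `x` and write `m = f_ρ(x) = ∑ ρ_y c_y`. Since `∑ ρ_y = 1`, the weighted losses satisfy the
bias–variance identity `∑ ρ_y ‖c_y - v‖² = ∑ ρ_y ‖c_y - m‖² + ‖v - m‖²`, so the excess S-LS risk
is `∫ ‖f - f_ρ‖²` and `f_ρ` minimises `E`. The simplex geometry gives
`⟪c_y, m⟫ = (T ρ_y - 1) / (T - 1)`, so `ρ` is an increasing affine function of the scores
`⟪c_y, m⟫`. If `a = D(f(x))` and `b = D(m)`, then `⟪c_b - c_a, f(x)⟫ ≤ 0`, hence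
`ρ_b - ρ_a ≤ (T-1)/T ⟪c_b - c_a, m - f(x)⟫ ≤ (T-1)/T ‖c_b - c_a‖ ‖f(x) - m‖`, and
`‖c_b - c_a‖² = 2T/(T-1)` turns the constant into `√(2(T-1)/T)`. Integrating and applying
`∫ g ≤ (∫ g²)^{1/2}` on a probability space finishes the proof.
-/

open scoped RealInnerProductSpace
open MeasureTheory

section WeightedMean

variable {ι V : Type*} [Fintype ι] [NormedAddCommGroup V] [InnerProductSpace ℝ V]

theorem sum_mul_norm_sub_sq (w : ι → ℝ) (hw : ∑ i, w i = 1) (c : ι → V) (u : V) :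
    ∑ i, w i * ‖c i - u‖ ^ 2 = ∑ i, w i * ‖c i‖ ^ 2 - 2 * ⟪∑ i, w i • c i, u⟫ + ‖u‖ ^ 2 := by
  simp only [norm_sub_sq_real, mul_add, mul_sub, Finset.sum_add_distrib, Finset.sum_sub_distrib,
    ← Finset.sum_mul, hw, sum_inner, real_inner_smul_left, Finset.mul_sum]
  ring_nf

theorem sum_mul_norm_sub_sq_eq_add (w : ι → ℝ) (hw : ∑ i, w i = 1) (c : ι → V) (v : V) :
    ∑ i, w i * ‖c i - v‖ ^ 2 =
      ∑ i, w i * ‖c i - ∑ j, w j • c j‖ ^ 2 + ‖v - ∑ j, w j • c j‖ ^ 2 := by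
  rw [sum_mul_norm_sub_sq w hw, sum_mul_norm_sub_sq w hw, norm_sub_sq_real,
    real_inner_self_eq_norm_sq, real_inner_comm]
  ring

theorem sum_mul_norm_sub_sq_eq_one_sub (w : ι → ℝ) (hw : ∑ i, w i = 1) {c : ι → V}
    (hc : ∀ i, ‖c i‖ = 1) :
    ∑ i, w i * ‖c i - ∑ j, w j • c j‖ ^ 2 = 1 - ‖∑ j, w j • c j‖ ^ 2 := by
  rw [sum_mul_norm_sub_sq w hw, real_inner_self_eq_norm_sq]
  simp only [hc, one_pow, mul_one, hw]
  ring

theorem norm_sum_smul_le_one {w : ι → ℝ} (hw0 : ∀ i, 0 ≤ w i) (hw : ∑ i, w i = 1) {c : ι → V}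
    (hc : ∀ i, ‖c i‖ ≤ 1) : ‖∑ i, w i • c i‖ ≤ 1 :=
  calc ‖∑ i, w i • c i‖ ≤ ∑ i, ‖w i • c i‖ := norm_sum_le _ _
    _ ≤ ∑ i, w i := Finset.sum_le_sum fun i _ => by
        rw [norm_smul, Real.norm_of_nonneg (hw0 i)]
        exact mul_le_of_le_one_right (hw0 i) (hc i)
    _ = 1 := hw

end WeightedMean

section SimplexCode

theorem Fin.two_le_of_ne {T : ℕ} {y y' : Fin T} (h : y ≠ y') : 2 ≤ T := by
  have := y.isLt
  have := y'.isLt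
  by_contra
  exact h (Fin.ext (by omega))

variable {V : Type*} [NormedAddCommGroup V] [InnerProductSpace ℝ V] {T : ℕ} {c : Fin T → V}

theorem inner_simplexCode_sum_smul (hT : 2 ≤ T) (hnorm : ∀ y, ‖c y‖ = 1)
    (hinner : ∀ y y', y ≠ y' → ⟪c y, c y'⟫ = -(1 / ((T : ℝ) - 1)))
    {w : Fin T → ℝ} (hw : ∑ y, w y = 1) (y : Fin T) :
    ⟪c y, ∑ y', w y' • c y'⟫ = (T * w y - 1) / (T - 1) := by
  have hT1 : (T : ℝ) - 1 ≠ 0 := by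
    have : (2 : ℝ) ≤ T := by exact_mod_cast hT
    linarith
  have hrest : ∑ y' ∈ Finset.univ.erase y, w y' = 1 - w y := by
    rw [← hw, ← Finset.add_sum_erase _ _ (Finset.mem_univ y)]
    ring
  rw [inner_sum, ← Finset.add_sum_erase _ _ (Finset.mem_univ y),
    Finset.sum_congr rfl fun y' hy' => by
      rw [real_inner_smul_right, hinner y y' (Finset.ne_of_mem_erase hy').symm],
    ← Finset.sum_mul, hrest, real_inner_smul_right, real_inner_self_eq_norm_sq, hnorm]
  field_simp
  ring

theorem norm_sub_sq_of_simplexCode (hnorm : ∀ y, ‖c y‖ = 1)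
    (hinner : ∀ y y', y ≠ y' → ⟪c y, c y'⟫ = -(1 / ((T : ℝ) - 1)))
    {y y' : Fin T} (hy : y ≠ y') : ‖c y - c y'‖ ^ 2 = 2 * T / (T - 1) := by
  have hT1 : (T : ℝ) - 1 ≠ 0 := by
    have : (2 : ℝ) ≤ T := by exact_mod_cast Fin.two_le_of_ne hy
    linarith
  rw [norm_sub_sq_real, hnorm, hnorm, hinner y y' hy]
  field_simp
  ring

theorem sub_le_mul_norm_sub_of_inner_le (hnorm : ∀ y, ‖c y‖ = 1)
    (hinner : ∀ y y', y ≠ y' → ⟪c y, c y'⟫ = -(1 / ((T : ℝ) - 1)))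
    {w : Fin T → ℝ} (hw : ∑ y, w y = 1) {α : V} {a b : Fin T} (hab : ⟪c b, α⟫ ≤ ⟪c a, α⟫) :
    w b - w a ≤ √(2 * ((T : ℝ) - 1) / T) * ‖α - ∑ y, w y • c y‖ := by
  rcases eq_or_ne b a with rfl | hne
  · simp only [sub_self]
    positivity
  set m := ∑ y, w y • c y
  have hT : 2 ≤ T := Fin.two_le_of_ne hne
  have hT1 : (0 : ℝ) < T - 1 := by
    have : (2 : ℝ) ≤ T := by exact_mod_cast hT
    linarith
  have hcoef : 0 ≤ ((T : ℝ) - 1) / T := div_nonneg hT1.le (by linarith)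
  have hgap : w b - w a = (T - 1) / T * ⟪c b - c a, m⟫ := by
    rw [inner_sub_left, inner_simplexCode_sum_smul hT hnorm hinner hw,
      inner_simplexCode_sum_smul hT hnorm hinner hw]
    field_simp
    ring
  have hconst : (T - 1) / T * ‖c b - c a‖ = √(2 * ((T : ℝ) - 1) / T) := by
    rw [eq_comm, Real.sqrt_eq_iff_eq_sq (div_nonneg (by linarith) (by linarith))
      (mul_nonneg hcoef (norm_nonneg _)), mul_pow, norm_sub_sq_of_simplexCode hnorm hinner hne]
    field_simp
  calc w b - w a = (T - 1) / T * ⟪c b - c a, m⟫ := hgap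
    _ ≤ (T - 1) / T * ⟪c b - c a, m - α⟫ := by
        gcongr
        simp only [inner_sub_left, inner_sub_right]
        linarith
    _ ≤ (T - 1) / T * (‖c b - c a‖ * ‖m - α‖) := by
        gcongr
        exact real_inner_le_norm _ _
    _ = √(2 * ((T : ℝ) - 1) / T) * ‖α - m‖ := by
        rw [← mul_assoc, hconst, norm_sub_rev]

end SimplexCode

section Integration

variable {X : Type*} [MeasurableSpace X] {μ : Measure X}

theorem measurable_apply_index {ι β : Type*} [Countable ι] [MeasurableSpace ι]
    [MeasurableSingletonClass ι] [MeasurableSpace β] {w : ι → X → β}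
    (hw : ∀ i, Measurable (w i)) {g : X → ι} (hg : Measurable g) :
    Measurable fun x => w (g x) x :=
  (measurable_from_prod_countable_right (f := fun p : ι × X => w p.1 p.2) hw).comp
    (hg.prodMk measurable_id)

theorem integrable_apply_index [IsFiniteMeasure μ] {ι : Type*} [Fintype ι] [MeasurableSpace ι]
    [MeasurableSingletonClass ι] {w : ι → X → ℝ} (hwmeas : ∀ i, Measurable (w i))
    (hw0 : ∀ i x, 0 ≤ w i x) (hw1 : ∀ x, ∑ i, w i x = 1) {g : X → ι} (hg : Measurable g) :
    Integrable (fun x => w (g x) x) μ :=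
  .of_bound (measurable_apply_index hwmeas hg).aestronglyMeasurable 1 <| .of_forall fun x => by
    rw [Real.norm_of_nonneg (hw0 _ x), ← hw1 x]
    exact Finset.single_le_sum (fun i _ => hw0 i x) (Finset.mem_univ _)

theorem integral_one_sub_apply_index_sub [IsFiniteMeasure μ] {ι : Type*} [Fintype ι]
    [MeasurableSpace ι] [MeasurableSingletonClass ι] {w : ι → X → ℝ}
    (hwmeas : ∀ i, Measurable (w i)) (hw0 : ∀ i x, 0 ≤ w i x) (hw1 : ∀ x, ∑ i, w i x = 1)
    {g h : X → ι} (hg : Measurable g) (hh : Measurable h) :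
    ∫ x, (1 - w (g x) x) ∂μ - ∫ x, (1 - w (h x) x) ∂μ = ∫ x, (w (h x) x - w (g x) x) ∂μ := by
  have hloss {k : X → ι} (hk : Measurable k) : Integrable (fun x => 1 - w (k x) x) μ :=
    (integrable_const 1).sub (integrable_apply_index hwmeas hw0 hw1 hk)
  rw [← integral_sub (hloss hg) (hloss hh)]
  simp only [sub_sub_sub_cancel_left]

theorem integral_le_sqrt_integral_sq [IsProbabilityMeasure μ] {f : X → ℝ} (hf : MemLp f 2 μ) :
    ∫ x, f x ∂μ ≤ √(∫ x, f x ^ 2 ∂μ) := by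
  have hvar := ProbabilityTheory.variance_nonneg f μ
  rw [ProbabilityTheory.variance_eq_sub hf] at hvar
  exact Real.le_sqrt_of_sq_le (by simpa using hvar)

variable {ι V : Type*} [Fintype ι] [NormedAddCommGroup V] [InnerProductSpace ℝ V]

theorem memLp_sum_smul [IsFiniteMeasure μ] {w : ι → X → ℝ} (hwmeas : ∀ i, Measurable (w i))
    (hw0 : ∀ i x, 0 ≤ w i x) (hw1 : ∀ x, ∑ i, w i x = 1) {c : ι → V} (hc : ∀ i, ‖c i‖ ≤ 1)
    (p : ENNReal) : MemLp (fun x => ∑ i, w i x • c i) p μ :=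
  .of_bound (Finset.aestronglyMeasurable_fun_sum _ fun i _ =>
      ((hwmeas i).aestronglyMeasurable.smul_const (c i))) 1
    (.of_forall fun x => norm_sum_smul_le_one (hw0 · x) (hw1 x) hc)

theorem integral_sum_mul_norm_sub_sq_sub [IsFiniteMeasure μ] {w : ι → X → ℝ}
    (hwmeas : ∀ i, Measurable (w i)) (hw0 : ∀ i x, 0 ≤ w i x) (hw1 : ∀ x, ∑ i, w i x = 1)
    {c : ι → V} (hc : ∀ i, ‖c i‖ = 1) {m : X → V} (hm : ∀ x, m x = ∑ i, w i x • c i)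
    {f : X → V} (hf : MemLp f 2 μ) :
    ∫ x, ∑ i, w i x * ‖c i - f x‖ ^ 2 ∂μ - ∫ x, ∑ i, w i x * ‖c i - m x‖ ^ 2 ∂μ =
      ∫ x, ‖f x - m x‖ ^ 2 ∂μ := by
  obtain rfl : m = fun x => ∑ i, w i x • c i := funext hm
  have hm2 := memLp_sum_smul (μ := μ) hwmeas hw0 hw1 (fun i => (hc i).le) 2
  have hrisk_m : Integrable (fun x => ∑ i, w i x * ‖c i - ∑ j, w j x • c j‖ ^ 2) μ := by
    simp only [sum_mul_norm_sub_sq_eq_one_sub _ (hw1 _) hc]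
    exact (integrable_const 1).sub ((memLp_two_iff_integrable_sq_norm hm2.1).1 hm2)
  have hexcess : Integrable (fun x => ‖f x - ∑ j, w j x • c j‖ ^ 2) μ :=
    (memLp_two_iff_integrable_sq_norm (hf.sub hm2).1).1 (hf.sub hm2)
  simp only [sum_mul_norm_sub_sq_eq_add _ (hw1 _) c (f _)]
  rw [integral_add hrisk_m hexcess]
  ring

end Integration

theorem simplex_ls_comparison_inequality_general
    {X : Type*} [MeasurableSpace X] (μ : Measure X) [IsProbabilityMeasure μ]
    (T : ℕ)
    (c : Fin T → EuclideanSpace ℝ (Fin (T - 1)))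
    (hnorm : ∀ y, ‖c y‖ = 1)
    (hinner : ∀ y y', y ≠ y' → ⟪c y, c y'⟫ = -(1 / ((T : ℝ) - 1)))
    (ρ : Fin T → X → ℝ) (hρmeas : ∀ y, Measurable (ρ y))
    (hρ0 : ∀ y x, 0 ≤ ρ y x)
    (hρsum : ∀ x, ∑ y, ρ y x = 1)
    (D : EuclideanSpace ℝ (Fin (T - 1)) → Fin T) (hDmeas : Measurable D)
    (hD : ∀ α y, ⟪c y, α⟫ ≤ ⟪c (D α), α⟫)
    (fρ : X → EuclideanSpace ℝ (Fin (T - 1))) (hfρ : ∀ x, fρ x = ∑ y, ρ y x • c y)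
    (R : (X → Fin T) → ℝ) (hR : ∀ g : X → Fin T, R g = ∫ x, (1 - ρ (g x) x) ∂μ)
    (E : (X → EuclideanSpace ℝ (Fin (T - 1))) → ℝ)
    (hE : ∀ f : X → EuclideanSpace ℝ (Fin (T - 1)),
      E f = ∫ x, ∑ y, ρ y x * ‖c y - f x‖ ^ 2 ∂μ)
    (f : X → EuclideanSpace ℝ (Fin (T - 1))) (hfmeas : Measurable f)
    (hfint : Integrable (fun x => ‖f x‖ ^ 2) μ) :
    R (D ∘ f) - R (D ∘ fρ) ≤
      Real.sqrt (2 * ((T : ℝ) - 1) / T) * Real.sqrt (E f - E fρ) ∧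
    E fρ ≤ E f := by
  have hf2 : MemLp f 2 μ := (memLp_two_iff_integrable_sq_norm hfmeas.aestronglyMeasurable).2 hfint
  have hfρmeas : Measurable fρ := by
    rw [funext hfρ]
    fun_prop
  have hdist : MemLp (fun x => ‖f x - fρ x‖) 2 μ := by
    refine (hf2.sub ?_).norm
    rw [funext hfρ]
    exact memLp_sum_smul hρmeas hρ0 hρsum (fun y => (hnorm y).le) 2
  have hexcess : E f - E fρ = ∫ x, ‖f x - fρ x‖ ^ 2 ∂μ := by
    rw [hE, hE]
    exact integral_sum_mul_norm_sub_sq_sub hρmeas hρ0 hρsum hnorm hfρ hf2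
  have hpointwise : ∀ x, ρ (D (fρ x)) x - ρ (D (f x)) x ≤
      √(2 * ((T : ℝ) - 1) / T) * ‖f x - fρ x‖ := fun x => by
    rw [hfρ]
    exact sub_le_mul_norm_sub_of_inner_le hnorm hinner (hρsum x) (hD (f x) _)
  have hexcess_nonneg : 0 ≤ ∫ x, ‖f x - fρ x‖ ^ 2 ∂μ := integral_nonneg fun x => by positivity
  refine ⟨?_, by linarith⟩
  rw [hR, hR, integral_one_sub_apply_index_sub hρmeas hρ0 hρsum (hDmeas.comp hfmeas)
    (hDmeas.comp hfρmeas), hexcess]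
  calc ∫ x, (ρ (D (fρ x)) x - ρ (D (f x)) x) ∂μ
      ≤ ∫ x, √(2 * ((T : ℝ) - 1) / T) * ‖f x - fρ x‖ ∂μ :=
        integral_mono ((integrable_apply_index hρmeas hρ0 hρsum (hDmeas.comp hfρmeas)).sub
          (integrable_apply_index hρmeas hρ0 hρsum (hDmeas.comp hfmeas)))
          ((hdist.integrable one_le_two).const_mul _) hpointwise
    _ = √(2 * ((T : ℝ) - 1) / T) * ∫ x, ‖f x - fρ x‖ ∂μ := integral_const_mul _ _
    _ ≤ √(2 * ((T : ℝ) - 1) / T) * √(∫ x, ‖f x - fρ x‖ ^ 2 ∂μ) := by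
        gcongr
        exact integral_le_sqrt_integral_sq hdist

/-- comparison inequality for the simplex least squares loss.  With a
probability measure `μ`, conditional probabilities `ρ`, simplex coding `c`, measurable
decoding `D`, target `f_ρ(x) = ∑ y, ρ y x • c y`, misclassification risk
`R g = ∫ (1 - ρ (g x) x) dμ` and expected S-LS risk
`E f = ∫ ∑ y, ρ y x ‖c y - f x‖² dμ`, every measurable square-integrable
`f : X → ℝ^{T-1}` satisfies
`R (D ∘ f) - R (D ∘ f_ρ) ≤ √(2(T-1)/T) (E f - E f_ρ)^{1/2}`, and `f_ρ` minimizes `E`. -/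
theorem simplex_ls_comparison_inequality
    {X : Type*} [MeasurableSpace X] (μ : Measure X) [IsProbabilityMeasure μ]
    (T : ℕ) (hT : 2 ≤ T)
    (c : Fin T → EuclideanSpace ℝ (Fin (T - 1)))
    (hnorm : ∀ y, ‖c y‖ = 1)
    (hinner : ∀ y y', y ≠ y' → ⟪c y, c y'⟫ = -(1 / ((T : ℝ) - 1)))
    (hsum : ∑ y, c y = 0)
    (ρ : Fin T → X → ℝ) (hρmeas : ∀ y, Measurable (ρ y))
    (hρ0 : ∀ y x, 0 ≤ ρ y x) (hρ1 : ∀ y x, ρ y x ≤ 1)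
    (hρsum : ∀ x, ∑ y, ρ y x = 1)
    (D : EuclideanSpace ℝ (Fin (T - 1)) → Fin T) (hDmeas : Measurable D)
    (hD : ∀ α y, ⟪c y, α⟫ ≤ ⟪c (D α), α⟫)
    (fρ : X → EuclideanSpace ℝ (Fin (T - 1))) (hfρ : ∀ x, fρ x = ∑ y, ρ y x • c y)
    (R : (X → Fin T) → ℝ) (hR : ∀ g : X → Fin T, R g = ∫ x, (1 - ρ (g x) x) ∂μ)
    (E : (X → EuclideanSpace ℝ (Fin (T - 1))) → ℝ)
    (hE : ∀ f : X → EuclideanSpace ℝ (Fin (T - 1)),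
      E f = ∫ x, ∑ y, ρ y x * ‖c y - f x‖ ^ 2 ∂μ)
    (f : X → EuclideanSpace ℝ (Fin (T - 1))) (hfmeas : Measurable f)
    (hfint : Integrable (fun x => ‖f x‖ ^ 2) μ) :
    R (D ∘ f) - R (D ∘ fρ) ≤
      Real.sqrt (2 * ((T : ℝ) - 1) / T) * Real.sqrt (E f - E fρ) ∧
    E fρ ≤ E f :=
  simplex_ls_comparison_inequality_general μ T c hnorm hinner ρ hρmeas hρ0 hρsum D hDmeas hD fρ hfρ
    R hR E hE f hfmeas hfint
end

section
/- Let T ≥ 2, n ≥ 2, p ≥ 1 and λ > 0. Let x_1, …, x_n ∈ ℝ^p, let c_1, …, c_T be a simplex coding in ℝ^{T−1} and y_1, …, y_n ∈ {1, …, T}. Let X̂ ∈ ℝ^{n×p} have rows x_i^⊤, let Ŷ ∈ ℝ^{n×(T−1)} have rows c_{y_i}^⊤, let K = X̂ X̂^⊤ ∈ ℝ^{n×n}, and set 𝒦(λ) = (K + λ n I)^{−1} and C(λ) = 𝒦(λ) Ŷ. For each i, let W^{(i)} ∈ ℝ^{(T−1)×p} be the minimizer of the leave-one-out objective W ↦ ∑_{j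 ≠ i} ‖c_{y_j} − W x_j‖² + λ n ‖W‖_F². Then the leave-one-out prediction at x_i admits the closed form: c_{y_i} − W^{(i)} x_i = C(λ)_i / 𝒦(λ)_{ii}, where C(λ)_i ∈ ℝ^{T−1} denotes the i-th row of C(λ); equivalently, the matrix of leave-one-out predictions is f_loo^λ = Ŷ − C(λ) ⊙ M(λ), where M(λ)_{ij} = 1/𝒦(λ)_{ii} for all j and ⊙ is the Hadamard (entrywise) product. -/
open scoped RealInnerProductSpace

/-!
Ridge regression is solved row by row, and a minimiser `w` of
`∑_{j ∈ s} (b_j - w ⬝ x_j)² + μ ‖w‖²` satisfies the normal equation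
`μ w = ∑_{j ∈ s} (b_j - w ⬝ x_j) x_j`. For the leave-one-out problem this says that the residual
matrix `R'` of `W⁽ⁱ⁾`, with its `i`-th row set to zero, solves `(K + μ I) R' = μ Y'`, where `Y'` is
`Ŷ` with its `i`-th row replaced by the prediction `W⁽ⁱ⁾ x_i`. Hence `R' = μ 𝒦 Y'`, and reading
off row `i` gives `(𝒦 Ŷ)_i = (𝒦 (Ŷ - Y'))_i = 𝒦_ii (Ŷ_i - W⁽ⁱ⁾ x_i)`.
-/

open Matrix

section Ridge

variable {𝕜 ι p : Type*} [Fintype p]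

def ridgeLoss [CommRing 𝕜] (s : Finset ι) (b : ι → 𝕜) (x : ι → p → 𝕜) (μ : 𝕜) (w : p → 𝕜) : 𝕜 :=
  ∑ j ∈ s, (b j - w ⬝ᵥ x j) ^ 2 + μ * (w ⬝ᵥ w)

lemma ridgeLoss_add_smul [CommRing 𝕜] (s : Finset ι) (b : ι → 𝕜) (x : ι → p → 𝕜) (μ : 𝕜)
    (w d : p → 𝕜) (t : 𝕜) :
    ridgeLoss s b x μ (w + t • d) = ridgeLoss s b x μ w
      + (∑ j ∈ s, (d ⬝ᵥ x j) ^ 2 + μ * (d ⬝ᵥ d)) * (t * t)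
      + 2 * ((μ • w - ∑ j ∈ s, (b j - w ⬝ᵥ x j) • x j) ⬝ᵥ d) * t := by
  have hdata : ∑ j ∈ s, (b j - (w ⬝ᵥ x j + t * d ⬝ᵥ x j)) ^ 2 = ∑ j ∈ s, (b j - w ⬝ᵥ x j) ^ 2
      + (∑ j ∈ s, (d ⬝ᵥ x j) ^ 2) * (t * t) - 2 * (∑ j ∈ s, (b j - w ⬝ᵥ x j) * d ⬝ᵥ x j) * t := by
    simp only [Finset.sum_mul, Finset.mul_sum, ← Finset.sum_add_distrib, ← Finset.sum_sub_distrib]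
    exact Finset.sum_congr rfl fun j _ => by ring
  simp only [ridgeLoss, add_dotProduct, dotProduct_add, smul_dotProduct, dotProduct_smul,
    sub_dotProduct, sum_dotProduct, smul_eq_mul, dotProduct_comm d w, dotProduct_comm (x _) d,
    hdata]
  ring

lemma sum_ridgeLoss_row_eq {m : Type*} [Fintype m] [CommRing 𝕜] (s : Finset ι) (Y : ι → m → 𝕜)
    (x : ι → p → 𝕜) (μ : 𝕜) (W : Matrix m p 𝕜) :
    ∑ k, ridgeLoss s (Y · k) x μ (W k) =
      ∑ j ∈ s, ∑ k, (Y j k - (W *ᵥ x j) k) ^ 2 + μ * ∑ k, ∑ l, W k l ^ 2 := by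
  rw [Finset.sum_comm, Finset.mul_sum, ← Finset.sum_add_distrib]
  simp only [ridgeLoss, dotProduct, sq, mulVec]

variable [Field 𝕜] [LinearOrder 𝕜] [IsStrictOrderedRing 𝕜]

lemma linear_coeff_eq_zero_of_forall_nonneg {a b : 𝕜} (h : ∀ t, 0 ≤ a * (t * t) + b * t) :
    b = 0 := by
  have := discrim_le_zero (a := a) (b := b) (c := 0) (by simpa using h)
  rw [discrim] at this
  nlinarith [sq_nonneg b]

theorem smul_eq_sum_residual_smul_of_forall_ridgeLoss_le (s : Finset ι) (b : ι → 𝕜)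
    (x : ι → p → 𝕜) (μ : 𝕜) {w : p → 𝕜}
    (hmin : ∀ w', ridgeLoss s b x μ w ≤ ridgeLoss s b x μ w') :
    μ • w = ∑ j ∈ s, (b j - w ⬝ᵥ x j) • x j := by
  have hgrad : ∀ d, (μ • w - ∑ j ∈ s, (b j - w ⬝ᵥ x j) • x j) ⬝ᵥ d = 0 := fun d => by
    have h2 : 2 * ((μ • w - ∑ j ∈ s, (b j - w ⬝ᵥ x j) • x j) ⬝ᵥ d) = 0 :=
      linear_coeff_eq_zero_of_forall_nonneg
        (a := ∑ j ∈ s, (d ⬝ᵥ x j) ^ 2 + μ * (d ⬝ᵥ d)) fun t => by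
          have := hmin (w + t • d)
          rw [ridgeLoss_add_smul] at this
          linarith
    simpa using h2
  exact sub_eq_zero.mp (dotProduct_self_eq_zero.mp (hgrad _))

end Ridge

lemma le_of_forall_sum_le_sum {κ α M : Type*} [Fintype κ] [DecidableEq κ] [AddCommMonoid M]
    [PartialOrder M] [IsOrderedCancelAddMonoid M] (g : κ → α → M) {W : κ → α}
    (hmin : ∀ W' : κ → α, ∑ k, g k (W k) ≤ ∑ k, g k (W' k)) (k : κ) (w : α) :
    g k (W k) ≤ g k w := by
  have h := hmin (Function.update W k w)
  rw [← Finset.add_sum_erase _ _ (Finset.mem_univ k),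
    ← Finset.add_sum_erase _ _ (Finset.mem_univ k), Function.update_self,
    Finset.sum_congr rfl fun j hj =>
      congrArg (g j) (Function.update_of_ne (Finset.ne_of_mem_erase hj) w W)] at h
  exact le_of_add_le_add_right h

theorem leaveOneOut_mul_row_eq_diag_smul_residual {n p q 𝕜 : Type*} [Field 𝕜] [Fintype n]
    [DecidableEq n] [Fintype p]
    {X : Matrix n p 𝕜} {Y : Matrix n q 𝕜} {V : Matrix q p 𝕜} {μ : 𝕜} (hμ : μ ≠ 0)
    {A : Matrix n n 𝕜} (hA : A * (X * Xᵀ + μ • 1) = 1) {i : n}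
    (hV : ∀ k, μ • V k = ∑ j ∈ Finset.univ.erase i, (Y j k - V k ⬝ᵥ X j) • X j) :
    (A * Y) i = A i i • (Y - X * Vᵀ) i := by
  set R := Y - X * Vᵀ
  set R' := updateRow R i 0
  have hnormal : μ • Vᵀ = Xᵀ * R' := by
    refine Matrix.ext fun l k => ?_
    have := congrFun (hV k) l
    simp only [Pi.smul_apply, smul_eq_mul, Finset.sum_apply] at this
    rw [Matrix.smul_apply, transpose_apply, mul_apply, smul_eq_mul, this,
      ← Finset.sum_erase (f := fun j => Xᵀ l j * R' j k) (a := i) _ (by simp [R'])]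
    refine Finset.sum_congr rfl fun j hj => ?_
    simp [R', R, updateRow_ne (Finset.ne_of_mem_erase hj), mul_apply, dotProduct, mul_comm]
  have hsolve : (X * Xᵀ + μ • 1) * R' = μ • (Y - (R - R')) := by
    rw [Matrix.add_mul, Matrix.mul_assoc, ← hnormal, Matrix.smul_mul, Matrix.one_mul,
      Matrix.mul_smul]
    simp only [R, smul_sub]
    abel
  have hR' : R' = μ • (A * (Y - (R - R'))) := by
    rw [← Matrix.mul_smul, ← hsolve, ← Matrix.mul_assoc, hA, Matrix.one_mul]
  have hrow : (A * (Y - (R - R'))) i = 0 := by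
    have := congrFun hR' i
    simp only [R', updateRow_self] at this
    exact (smul_eq_zero.mp this.symm).resolve_left hμ
  have hsingle : (A * (R - R')) i = A i i • R i := by
    funext k
    simp [R', mul_apply, updateRow_apply, sub_ite]
  have hsplit : A * Y = A * (R - R') + A * (Y - (R - R')) := by
    rw [← Matrix.mul_add, add_sub_cancel]
  funext k
  rw [hsplit, Matrix.add_apply, ← hsingle, hrow]
  simp

lemma Matrix.posDef_mul_transpose_add_smul_one {n p : Type*} [Fintype n] [DecidableEq n]
    [Fintype p] (X : Matrix n p ℝ) {μ : ℝ} (hμ : 0 < μ) : (X * Xᵀ + μ • 1).PosDef := by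
  have hXXt : (X * Xᵀ).PosSemidef := by
    rw [← conjTranspose_eq_transpose_of_trivial]
    exact posSemidef_self_mul_conjTranspose X
  exact PosDef.posSemidef_add hXXt (PosDef.one.smul hμ)

theorem srls_leave_one_out_closed_form_general
    (T n p : ℕ)
    (lam : ℝ) (hlam : 0 < lam)
    (x : Fin n → Fin p → ℝ)
    (c : Fin T → EuclideanSpace ℝ (Fin (T - 1)))
    (y : Fin n → Fin T)
    (Xhat : Matrix (Fin n) (Fin p) ℝ) (hX : ∀ i j, Xhat i j = x i j)
    (Yhat : Matrix (Fin n) (Fin (T - 1)) ℝ) (hY : ∀ i k, Yhat i k = c (y i) k)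
    (K : Matrix (Fin n) (Fin n) ℝ) (hKdef : K = Xhat * Xhat.transpose)
    (Kl : Matrix (Fin n) (Fin n) ℝ)
    (hKl : Kl = (K + (lam * n) • (1 : Matrix (Fin n) (Fin n) ℝ))⁻¹)
    (Cl : Matrix (Fin n) (Fin (T - 1)) ℝ) (hCl : Cl = Kl * Yhat)
    (W : Fin n → Matrix (Fin (T - 1)) (Fin p) ℝ)
    (objLoo : Fin n → Matrix (Fin (T - 1)) (Fin p) ℝ → ℝ)
    (hobj : ∀ i W', objLoo i W' =
      ∑ j ∈ Finset.univ.erase i, (∑ k, (c (y j) k - W'.mulVec (x j) k) ^ 2) +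
        lam * n * ∑ k, ∑ l, (W' k l) ^ 2)
    (hmin : ∀ i W', objLoo i (W i) ≤ objLoo i W') :
    ∀ (i : Fin n) (k : Fin (T - 1)),
      c (y i) k - (W i).mulVec (x i) k = Cl i k / Kl i i := by
  intro i k
  obtain rfl : Xhat = Matrix.of x := Matrix.ext hX
  obtain rfl : Yhat = Matrix.of fun j k => c (y j) k := Matrix.ext hY
  subst hKdef hKl hCl
  have hμ : 0 < lam * n := mul_pos hlam (Nat.cast_pos.mpr i.pos)
  have hM := Xhat.posDef_mul_transpose_add_smul_one hμ
  have hobj_rows : ∀ W', objLoo i W' =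
      ∑ k, ridgeLoss (Finset.univ.erase i) (fun j => c (y j) k) Xhat (lam * n) (W' k) :=
    fun W' => (hobj i W').trans (sum_ridgeLoss_row_eq _ (fun j k => c (y j) k) Xhat _ W').symm
  have hrows : ∀ k, (lam * n) • W i k = ∑ j ∈ Finset.univ.erase i,
      (c (y j) k - W i k ⬝ᵥ Xhat j) • Xhat j := fun k =>
    smul_eq_sum_residual_smul_of_forall_ridgeLoss_le _ _ _ _ <| le_of_forall_sum_le_sum _
      (fun W' => (hobj_rows (W i)).symm.trans_le ((hmin i W').trans_eq (hobj_rows W'))) k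
  have hres := leaveOneOut_mul_row_eq_diag_smul_residual
    (Y := Matrix.of fun j k => c (y j) k) hμ.ne' (nonsing_inv_mul _ ((isUnit_iff_isUnit_det _).mp hM.isUnit)) hrows
  rw [eq_div_iff hM.inv.diag_pos.ne', congrFun hres k]
  simp [mul_comm, mulVec, dotProduct, mul_apply]

/-- closed form for the leave-one-out predictions of simplex regularized
least squares.  With `X̂` the data matrix, `Ŷ` the matrix of simplex codes,
`K = X̂ X̂ᵀ`, `𝒦(λ) = (K + λ n I)⁻¹`, `C(λ) = 𝒦(λ) Ŷ`, and `W⁽ⁱ⁾` the minimizer of the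
leave-one-out objective `W ↦ ∑_{j ≠ i} ‖c (y j) - W x_j‖² + λ n ‖W‖_F²`, one has, for
every `i` and every coordinate `k`:
`(c (y i) - W⁽ⁱ⁾ x_i)_k = C(λ)_{ik} / 𝒦(λ)_{ii}`; equivalently the matrix of
leave-one-out predictions is `Ŷ - C(λ) ⊙ M(λ)` with `M(λ)_{ij} = 1/𝒦(λ)_{ii}`. -/
theorem srls_leave_one_out_closed_form
    (T n p : ℕ) (hT : 2 ≤ T) (hn : 2 ≤ n) (hp : 1 ≤ p)
    (lam : ℝ) (hlam : 0 < lam)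
    (x : Fin n → Fin p → ℝ)
    (c : Fin T → EuclideanSpace ℝ (Fin (T - 1)))
    (hnorm : ∀ y, ‖c y‖ = 1)
    (hinner : ∀ y y', y ≠ y' → ⟪c y, c y'⟫ = -(1 / ((T : ℝ) - 1)))
    (hsum : ∑ y, c y = 0)
    (y : Fin n → Fin T)
    (Xhat : Matrix (Fin n) (Fin p) ℝ) (hX : ∀ i j, Xhat i j = x i j)
    (Yhat : Matrix (Fin n) (Fin (T - 1)) ℝ) (hY : ∀ i k, Yhat i k = c (y i) k)
    (K : Matrix (Fin n) (Fin n) ℝ) (hKdef : K = Xhat * Xhat.transpose)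
    (Kl : Matrix (Fin n) (Fin n) ℝ)
    (hKl : Kl = (K + (lam * n) • (1 : Matrix (Fin n) (Fin n) ℝ))⁻¹)
    (Cl : Matrix (Fin n) (Fin (T - 1)) ℝ) (hCl : Cl = Kl * Yhat)
    (W : Fin n → Matrix (Fin (T - 1)) (Fin p) ℝ)
    (objLoo : Fin n → Matrix (Fin (T - 1)) (Fin p) ℝ → ℝ)
    (hobj : ∀ i W', objLoo i W' =
      ∑ j ∈ Finset.univ.erase i, (∑ k, (c (y j) k - W'.mulVec (x j) k) ^ 2) +
        lam * n * ∑ k, ∑ l, (W' k l) ^ 2)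
    (hmin : ∀ i W', objLoo i (W i) ≤ objLoo i W') :
    ∀ (i : Fin n) (k : Fin (T - 1)),
      c (y i) k - (W i).mulVec (x i) k = Cl i k / Kl i i :=
  srls_leave_one_out_closed_form_general T n p lam hlam x c y Xhat hX Yhat hY K hKdef Kl hKl Cl hCl
    W objLoo hobj hmin
end
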